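/- Let L ∈ {ALC, ALCI}, let I be an interpretation, and let (A, q) be a positive ABox-UCQ example such that each CQ in q is connected and such that for every homomorphism h from A to I, I_{A,h,L} ⊨ q. Then there exists a maximally connected component B of A such that for every homomorphism h from A to I, I_{B,h,L} ⊨ q (where h is restricted to ind(B)). -/

import Mathlib

/-!
Formalization background for "Fitting Ontologies to ABox-Query Examples":
description logics ALC / ALCI / ALCQ, ABoxes, interpretations (with standard
names assumption), ontologies, queries (AQ / CQ / full CQ / UCQ), fitting
problems, homomorphisms, forest models, unravelings, etc.
-/

namespace DLFit

/-- Roles: role names and inverse roles (both indexed by natural numbers). -/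
inductive DLRole : Type
  | name (r : ℕ)
  | inv (r : ℕ)
deriving DecidableEq

/-- Concepts of ALCIQ, a common superlanguage of ALC, ALCI and ALCQ. -/
inductive Concept : Type
  | top
  | atom (A : ℕ)
  | neg (C : Concept)
  | inter (C D : Concept)
  | ex (r : DLRole) (C : Concept)
  | atLeast (n : ℕ) (r : DLRole) (C : Concept)
  | atMost (n : ℕ) (r : DLRole) (C : Concept)
deriving DecidableEq

/-- A concept uses no inverse roles. -/
def Concept.invFree : Concept → Prop
  | .top => True
  | .atom _ => True
  | .neg C => C.invFree
  | .inter C D => C.invFree ∧ D.invFree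
  | .ex r C => (∃ m, r = DLRole.name m) ∧ C.invFree
  | .atLeast _ r C => (∃ m, r = DLRole.name m) ∧ C.invFree
  | .atMost _ r C => (∃ m, r = DLRole.name m) ∧ C.invFree

/-- A concept uses no qualified number restrictions. -/
def Concept.countFree : Concept → Prop
  | .top => True
  | .atom _ => True
  | .neg C => C.countFree
  | .inter C D => C.countFree ∧ D.countFree
  | .ex _ C => C.countFree
  | .atLeast _ _ _ => False
  | .atMost _ _ _ => False

/-- An ontology is a finite set of concept inclusions `C ⊑ D`. -/
abbrev Ontology := Finset (Concept × Concept)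

/-- The two ontology languages considered: ALC and ALCI. -/
inductive DL : Type
  | alc
  | alci
deriving DecidableEq

/-- Membership of an ontology in ALC resp. ALCI. -/
def OntologyInLang : DL → Ontology → Prop
  | .alc, O => ∀ ci ∈ O, ci.1.invFree ∧ ci.1.countFree ∧ ci.2.invFree ∧ ci.2.countFree
  | .alci, O => ∀ ci ∈ O, ci.1.countFree ∧ ci.2.countFree

/-- An ALCQ-ontology: no inverse roles (number restrictions allowed). -/
def OntologyIsALCQ (O : Ontology) : Prop := ∀ ci ∈ O, ci.1.invFree ∧ ci.2.invFree

/-- ABox assertions `A(a)` and `r(a,b)`. -/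
inductive Assertion : Type
  | conc (A : ℕ) (a : ℕ)
  | role (r : ℕ) (a b : ℕ)
deriving DecidableEq

/-- An ABox is a finite set of assertions. -/
abbrev ABox := Finset Assertion

def AssertionInds : Assertion → Finset ℕ
  | .conc _ a => {a}
  | .role _ a b => {a, b}

/-- The individual names occurring in an ABox. -/
def ABoxInds (A : ABox) : Finset ℕ := A.biUnion AssertionInds

def AssertionCNs : Assertion → Finset ℕ
  | .conc P _ => {P}
  | .role _ _ _ => ∅

/-- The concept names occurring in an ABox. -/
def ABoxCNs (A : ABox) : Finset ℕ := A.biUnion AssertionCNs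

/-- An interpretation, with the standard names assumption: every individual
name denotes itself, i.e. the (injective) map `indI` embeds the individual
names into the domain. -/
structure Interp : Type 1 where
  Dom : Type
  indI : ℕ → Dom
  indI_inj : Function.Injective indI
  concI : ℕ → Set Dom
  roleI : ℕ → Set (Dom × Dom)

/-- Semantics of (possibly inverse) roles. -/
def Interp.rSem (I : Interp) : DLRole → Set (I.Dom × I.Dom)
  | .name r => I.roleI r
  | .inv r => {p | (p.2, p.1) ∈ I.roleI r}

/-- Semantics of concepts. -/
def Interp.cSem (I : Interp) : Concept → Set I.Dom
  | .top => Set.univ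
  | .atom A => I.concI A
  | .neg C => (I.cSem C)ᶜ
  | .inter C D => I.cSem C ∩ I.cSem D
  | .ex r C => {d | ∃ e, (d, e) ∈ I.rSem r ∧ e ∈ I.cSem C}
  | .atLeast n r C => {d | (n : ℕ∞) ≤ {e | (d, e) ∈ I.rSem r ∧ e ∈ I.cSem C}.encard}
  | .atMost n r C => {d | {e | (d, e) ∈ I.rSem r ∧ e ∈ I.cSem C}.encard ≤ (n : ℕ∞)}

/-- `I` is a model of the ontology `O`. -/
def Interp.IsModelOf (I : Interp) (O : Ontology) : Prop :=
  ∀ ci ∈ O, I.cSem ci.1 ⊆ I.cSem ci.2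

def Interp.SatAssertion (I : Interp) : Assertion → Prop
  | .conc P a => I.indI a ∈ I.concI P
  | .role r a b => (I.indI a, I.indI b) ∈ I.roleI r

/-- `I` is a model of the ABox `A` (individual names interpreted as themselves). -/
def Interp.SatABox (I : Interp) (A : ABox) : Prop := ∀ α ∈ A, I.SatAssertion α

/-- An ABox is consistent with an ontology if they have a common model. -/
def ConsistentWith (A : ABox) (O : Ontology) : Prop :=
  ∃ I : Interp, I.IsModelOf O ∧ I.SatABox A

/-- Homomorphism between ABoxes (need not fix individual names). -/
def ABoxHom (h : ℕ → ℕ) (A B : ABox) : Prop :=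
  (∀ P a, Assertion.conc P a ∈ A → Assertion.conc P (h a) ∈ B) ∧
  (∀ r a b, Assertion.role r a b ∈ A → Assertion.role r (h a) (h b) ∈ B)

/-- Homomorphism from an ABox into an interpretation. -/
def ABoxIHom (I : Interp) (h : ℕ → I.Dom) (A : ABox) : Prop :=
  (∀ P a, Assertion.conc P a ∈ A → h a ∈ I.concI P) ∧
  (∀ r a b, Assertion.role r a b ∈ A → (h a, h b) ∈ I.roleI r)

/-- Local injectivity of a homomorphism on an ABox. -/
def LocInj {D : Type} (h : ℕ → D) (A : ABox) : Prop :=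
  ∀ r a b c, Assertion.role r a b ∈ A → Assertion.role r a c ∈ A → h b = h c → b = c

/-- The ABoxes in a collection of examples have pairwise disjoint individual names. -/
def PairwiseDisjInds (S : Finset ABox) : Prop :=
  ∀ A ∈ S, ∀ B ∈ S, A ≠ B → Disjoint (ABoxInds A) (ABoxInds B)

/-! ## Queries -/

/-- Terms of a query: variables and individual names. -/
inductive Term : Type
  | var (x : ℕ)
  | ind (a : ℕ)
deriving DecidableEq

/-- Atoms of a query. -/
inductive Atom : Type
  | catom (A : ℕ) (t : Term)
  | ratom (r : ℕ) (t t' : Term)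
deriving DecidableEq

/-- A (Boolean) conjunctive query, viewed as its finite set of atoms;
all variables are (implicitly) existentially quantified. -/
abbrev CQ := Finset Atom

/-- A union of conjunctive queries. -/
abbrev UCQ := Finset CQ

def TermInds : Term → Finset ℕ
  | .var _ => ∅
  | .ind a => {a}

def AtomInds : Atom → Finset ℕ
  | .catom _ t => TermInds t
  | .ratom _ t t' => TermInds t ∪ TermInds t'

/-- Individual names occurring in a CQ. -/
def CQInds (q : CQ) : Finset ℕ := q.biUnion AtomInds

def UCQInds (q : UCQ) : Finset ℕ := q.biUnion CQInds

def AtomCNs : Atom → Finset ℕ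
  | .catom P _ => {P}
  | .ratom _ _ _ => ∅

/-- Concept names occurring in a CQ. -/
def CQCNs (q : CQ) : Finset ℕ := q.biUnion AtomCNs

def UCQCNs (q : UCQ) : Finset ℕ := q.biUnion CQCNs

def AtomGround : Atom → Prop
  | .catom _ t => ∃ a, t = Term.ind a
  | .ratom _ t t' => (∃ a, t = Term.ind a) ∧ (∃ a, t' = Term.ind a)

/-- A full CQ: no (existentially quantified) variables. -/
def CQIsFull (q : CQ) : Prop := ∀ α ∈ q, AtomGround α

def TermEval (I : Interp) (v : ℕ → I.Dom) : Term → I.Dom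
  | .var x => v x
  | .ind a => I.indI a

def Interp.SatAtom (I : Interp) (v : ℕ → I.Dom) : Atom → Prop
  | .catom P t => TermEval I v t ∈ I.concI P
  | .ratom r t t' => (TermEval I v t, TermEval I v t') ∈ I.roleI r

/-- `I ⊨ q` for a CQ `q`: there is a (strong) homomorphism of the atoms of `q`
into `I` that is the identity on individual names. -/
def Interp.SatCQ (I : Interp) (q : CQ) : Prop :=
  ∃ v : ℕ → I.Dom, ∀ α ∈ q, I.SatAtom v α

/-- `I ⊨ q` for a UCQ `q`: some disjunct is satisfied. -/
def Interp.SatUCQ (I : Interp) (q : UCQ) : Prop := ∃ p ∈ q, I.SatCQ p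

/-- `A ∪ O ⊨ Q(a)` for an atomic query. -/
def EntailsAQ (A : ABox) (O : Ontology) (Q a : ℕ) : Prop :=
  ∀ I : Interp, I.IsModelOf O → I.SatABox A → I.indI a ∈ I.concI Q

/-- `A ∪ O ⊨ q` for a CQ. -/
def EntailsCQ (A : ABox) (O : Ontology) (q : CQ) : Prop :=
  ∀ I : Interp, I.IsModelOf O → I.SatABox A → I.SatCQ q

/-- `A ∪ O ⊨ q` for a UCQ. -/
def EntailsUCQ (A : ABox) (O : Ontology) (q : UCQ) : Prop :=
  ∀ I : Interp, I.IsModelOf O → I.SatABox A → I.SatUCQ q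

/-! ## Examples and fitting -/

/-- An ABox-AQ example `(𝒜, Q(a))`. -/
abbrev AQEx := ABox × ℕ × ℕ

/-- An ABox-CQ (in particular, ABox-FullCQ) example `(𝒜, q)`. -/
abbrev CQEx := ABox × CQ

/-- An ABox-UCQ example `(𝒜, q)`. -/
abbrev UEx := ABox × UCQ

/-- `O` fits a collection of labeled ABox(-consistency) examples. -/
def FitsCons (O : Ontology) (Ep En : Finset ABox) : Prop :=
  (∀ A ∈ Ep, ConsistentWith A O) ∧ (∀ A ∈ En, ¬ ConsistentWith A O)

/-- `O` fits a collection of labeled ABox-AQ examples. -/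
def FitsAQ (O : Ontology) (Ep En : Finset AQEx) : Prop :=
  (∀ e ∈ Ep, EntailsAQ e.1 O e.2.1 e.2.2) ∧ (∀ e ∈ En, ¬ EntailsAQ e.1 O e.2.1 e.2.2)

/-- `O` fits a collection of labeled ABox-CQ examples. -/
def FitsCQ (O : Ontology) (Ep En : Finset CQEx) : Prop :=
  (∀ e ∈ Ep, EntailsCQ e.1 O e.2) ∧ (∀ e ∈ En, ¬ EntailsCQ e.1 O e.2)

/-- `O` fits a collection of labeled ABox-UCQ examples. -/
def FitsUCQ (O : Ontology) (Ep En : Finset UEx) : Prop :=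
  (∀ e ∈ Ep, EntailsUCQ e.1 O e.2) ∧ (∀ e ∈ En, ¬ EntailsUCQ e.1 O e.2)

/-- An example `(A, q)` is inconsistent if every ALCI-ontology `O` with
`A ∪ O ⊨ q` is inconsistent with `A`. -/
def InconsistentEx (A : ABox) (q : CQ) : Prop :=
  ∀ O : Ontology, OntologyInLang DL.alci O → EntailsCQ A O q → ¬ ConsistentWith A O

/-! ## Completions and refutation candidates -/

/-- The disjoint union `A⁻` of the ABoxes of the negative AQ examples
(the ABoxes of a collection have pairwise disjoint individual names, so the
disjoint union is the plain union). -/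
def NegUnionAQ (En : Finset AQEx) : ABox := En.sup Prod.fst

/-- The disjoint union `A⁻` of the ABoxes of the negative CQ examples. -/
def NegUnionCQ (En : Finset CQEx) : ABox := En.sup Prod.fst

/-- A completion for a collection of ABox-AQ examples: extends `A⁻` by concept
assertions `Q(b)` with `b ∈ ind(A⁻)` and `Q` occurring as an AQ in `E⁺`. -/
def IsCompletionAQ (Ep En : Finset AQEx) (C : ABox) : Prop :=
  NegUnionAQ En ⊆ C ∧
  ∀ α ∈ C, α ∈ NegUnionAQ En ∨
    ∃ Q b, α = Assertion.conc Q b ∧ b ∈ ABoxInds (NegUnionAQ En) ∧ ∃ e ∈ Ep, e.2.1 = Q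

/-- Refutation candidates for a collection of ABox-AQ examples. -/
inductive RefCandAQ (Ep : Finset AQEx) (base : ABox) : ABox → Prop
  | base : RefCandAQ Ep base base
  | step {C : ABox} {A : ABox} {Q a : ℕ} {h : ℕ → ℕ} :
      RefCandAQ Ep base C → (A, Q, a) ∈ Ep → ABoxHom h A C →
      RefCandAQ Ep base (insert (Assertion.conc Q (h a)) C)

/-- A completion for a collection of ABox-FullCQ examples: extends `A⁻` by
concept assertions `Q(b)` with `b ∈ ind(A⁻)` and `Q` occurring in a query of a
positive example. -/
def IsCompletionCQ (Ep En : Finset CQEx) (C : ABox) : Prop :=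
  NegUnionCQ En ⊆ C ∧
  ∀ α ∈ C, α ∈ NegUnionCQ En ∨
    ∃ Q b, α = Assertion.conc Q b ∧ b ∈ ABoxInds (NegUnionCQ En) ∧ ∃ e ∈ Ep, Q ∈ CQCNs e.2

/-- Refutation candidates for a collection of ABox-FullCQ examples. -/
inductive RefCandCQ (Ep : Finset CQEx) (base : ABox) : ABox → Prop
  | base : RefCandCQ Ep base base
  | step {C : ABox} {A : ABox} {q : CQ} {Q a : ℕ} {h : ℕ → ℕ} :
      RefCandCQ Ep base C → (A, q) ∈ Ep → ¬ InconsistentEx A q → ABoxHom h A C →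
      Atom.catom Q (Term.ind a) ∈ q →
      RefCandCQ Ep base (insert (Assertion.conc Q (h a)) C)

/-! ## Forest models, unravelings and `I_{A,h,L}` -/

/-- The edge relation of the graph of a forest model: some role edge, excluding
pairs of ABox individuals. -/
def ForestEdge (I : Interp) (A : ABox) (d e : I.Dom) : Prop :=
  (∃ r, (d, e) ∈ I.roleI r) ∧
  ¬ ∃ a ∈ ABoxInds A, ∃ b ∈ ABoxInds A, d = I.indI a ∧ e = I.indI b

/-- The undirected version of the graph of a forest model. -/
def ForestGraph (I : Interp) (A : ABox) : SimpleGraph I.Dom where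
  Adj d e := d ≠ e ∧ (ForestEdge I A d e ∨ ForestEdge I A e d)
  symm := ⟨fun _ _ h => ⟨h.1.symm, h.2.symm⟩⟩
  loopless := ⟨fun _ h => h.1 rfl⟩

/-- `I` is an `L`-forest model of the ABox `A`:
it is a model of `A`; role edges among ABox individuals are exactly those
asserted in `A`; and the remaining role edges form a forest (for ALC a
directed forest whose edges point away from the roots, for ALCI an
undirected forest). -/
def IsForestModel (L : DL) (I : Interp) (A : ABox) : Prop :=
  I.SatABox A ∧
  (∀ r a b, a ∈ ABoxInds A → b ∈ ABoxInds A →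
    ((I.indI a, I.indI b) ∈ I.roleI r ↔ Assertion.role r a b ∈ A)) ∧
  (match L with
    | DL.alc =>
        (∀ e : I.Dom, {d : I.Dom | ForestEdge I A d e}.Subsingleton) ∧
        WellFounded (fun d e : I.Dom => ForestEdge I A d e)
    | DL.alci =>
        (∀ d : I.Dom, ¬ ForestEdge I A d d) ∧ (ForestGraph I A).IsAcyclic)

/-- `e` is a neighbor of `d` in `I`. -/
def Neighbor (I : Interp) (d e : I.Dom) : Prop :=
  ∃ r, (d, e) ∈ I.roleI r ∨ (e, d) ∈ I.roleI r

/-- The degree of `I` (maximal number of neighbors) is at most `n`. -/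
def DegreeLE (I : Interp) (n : ℕ) : Prop :=
  ∀ d : I.Dom, ∃ s : Finset I.Dom, s.card ≤ n ∧ ∀ e : I.Dom, Neighbor I d e → e ∈ s

/-- The disjoint union of a family of interpretations (`pick` chooses, for
every individual name, the component interpreting it). -/
def Interp.disjUnion {ι : Type} (J : ι → Interp) (pick : ℕ → ι) : Interp where
  Dom := Σ i : ι, (J i).Dom
  indI := fun n => ⟨pick n, (J (pick n)).indI n⟩
  indI_inj := by
    intro m n hmn
    obtain ⟨h1, h2⟩ := Sigma.ext_iff.mp hmn
    dsimp only at h1 h2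
    rw [h1] at h2
    exact (J (pick n)).indI_inj (eq_of_heq h2)
  concI := fun P => {x | x.2 ∈ (J x.1).concI P}
  roleI := fun r => {p | ∃ (i : ι) (d e : (J i).Dom),
    p = (⟨i, d⟩, ⟨i, e⟩) ∧ (d, e) ∈ (J i).roleI r}

/-- `l` is a path in `I` starting at `d` (for `L = ALC`, only role names may
occur on the path; for `L = ALCI` also inverse roles). -/
def IsPathFrom (L : DL) (I : Interp) : I.Dom → List (DLRole × I.Dom) → Prop
  | _, [] => True
  | d, (r, e) :: l =>
      (d, e) ∈ I.rSem r ∧ (L = DL.alc → ∃ m, r = DLRole.name m) ∧ IsPathFrom L I e l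

/-- The tail (last element) of a path starting at `d`. -/
def PathTail (I : Interp) (d : I.Dom) (l : List (DLRole × I.Dom)) : I.Dom :=
  (l.getLast?).elim d Prod.snd

/-- Domain of `I_{A,h,L}`: individual names plus, for every individual name,
paths in `I` (elements not corresponding to `ind(A)` or to valid nonempty
paths are unlabeled and isolated junk). -/
abbrev IAhDom (I : Interp) : Type := ℕ ⊕ (ℕ × List (DLRole × I.Dom))

/-- The element of `I_{A,h,L}` given by the path `l` attached at individual
`a`; the root (empty path) is identified with `a` itself. -/
def IAhNode (I : Interp) (a : ℕ) : List (DLRole × I.Dom) → IAhDom I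
  | [] => Sum.inl a
  | l => Sum.inr (a, l)

/-- Validity of a path attached at `a` in `I_{A,h,L}`. -/
def IAhValid (L : DL) (I : Interp) (A : ABox) (h : ℕ → I.Dom)
    (a : ℕ) (l : List (DLRole × I.Dom)) : Prop :=
  a ∈ ABoxInds A ∧ IsPathFrom L I (h a) l

/-- The interpretation `I_{A,h,L}`: start from the interpretation with domain
`ind(A)`, concept memberships induced from `I` via `h`, and role edges exactly
the role assertions of `A`; then disjointly attach, for every `a ∈ ind(A)`,
the `L`-unraveling of `I` at `h(a)`, identifying its root with `a`. -/
def IAh (L : DL) (I : Interp) (A : ABox) (h : ℕ → I.Dom) : Interp where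
  Dom := IAhDom I
  indI := Sum.inl
  indI_inj := Sum.inl_injective
  concI := fun P => {x : IAhDom I |
    (∃ a, x = Sum.inl a ∧ a ∈ ABoxInds A ∧ h a ∈ I.concI P) ∨
    (∃ a l, x = Sum.inr (a, l) ∧ l ≠ [] ∧ IAhValid L I A h a l ∧
      PathTail I (h a) l ∈ I.concI P)}
  roleI := fun r => {p : IAhDom I × IAhDom I |
    (∃ a b, p.1 = Sum.inl a ∧ p.2 = Sum.inl b ∧ Assertion.role r a b ∈ A) ∨
    (∃ a l e, IAhValid L I A h a (l ++ [(DLRole.name r, e)]) ∧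
      p.1 = IAhNode I a l ∧ p.2 = IAhNode I a (l ++ [(DLRole.name r, e)])) ∨
    (∃ a l e, IAhValid L I A h a (l ++ [(DLRole.inv r, e)]) ∧
      p.1 = IAhNode I a (l ++ [(DLRole.inv r, e)]) ∧ p.2 = IAhNode I a l)}

/-- Restriction of an interpretation to the elements satisfying `P`
(elements outside `P` become unlabeled and isolated). -/
def Interp.restrictP (I : Interp) (P : I.Dom → Prop) : Interp where
  Dom := I.Dom
  indI := I.indI
  indI_inj := I.indI_inj
  concI := fun Q => {d | d ∈ I.concI Q ∧ P d}
  roleI := fun r => {p | p ∈ I.roleI r ∧ P p.1 ∧ P p.2}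

/-- Depth of elements of `I_{A,h,L}` (ABox individuals have depth 0). -/
def IAhDepthLE (I : Interp) (n : ℕ) : IAhDom I → Prop
  | Sum.inl _ => True
  | Sum.inr al => al.2.length ≤ n

/-! ## Sizes -/

/-- Size of a UCQ (number of atoms). -/
def UCQSize (q : UCQ) : ℕ := q.sum Finset.card

/-- Size of an ABox-UCQ example. -/
def UExSize (e : UEx) : ℕ := e.1.card + UCQSize e.2

/-- Size `||E||` of a collection of ABox-UCQ examples. -/
def ESize (Ep En : Finset UEx) : ℕ := Ep.sum UExSize + En.sum UExSize

/-- The (exponential) bound `bound(E)` on the degree: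
`||E⁻||` plus the sum over positive examples `(A,q)` of `(||(A,q)||+1)^{||q||}`. -/
def EBound (Ep En : Finset UEx) : ℕ :=
  En.sum UExSize + Ep.sum (fun e => (UExSize e + 1) ^ UCQSize e.2)

/-! ## Connectivity, components, variations -/

def ABoxAdj (A : ABox) (a b : ℕ) : Prop :=
  ∃ r, Assertion.role r a b ∈ A ∨ Assertion.role r b a ∈ A

/-- Connectivity of individuals in an ABox. -/
def ABoxConn (A : ABox) : ℕ → ℕ → Prop := Relation.ReflTransGen (ABoxAdj A)

/-- `B` is a maximally connected component of the ABox `A`. -/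
def IsComponent (B A : ABox) : Prop :=
  ∃ a ∈ ABoxInds A, ∀ α : Assertion,
    α ∈ B ↔ α ∈ A ∧ ∀ c ∈ AssertionInds α, ABoxConn A a c

def AtomTerms : Atom → Finset Term
  | .catom _ t => {t}
  | .ratom _ t t' => {t, t'}

/-- The terms (variables and individuals) occurring in a CQ. -/
def CQTerms (q : CQ) : Finset Term := q.biUnion AtomTerms

def CQAdj (q : CQ) (t t' : Term) : Prop :=
  ∃ r, Atom.ratom r t t' ∈ q ∨ Atom.ratom r t' t ∈ q

/-- A CQ is connected. -/
def CQConnected (q : CQ) : Prop :=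
  ∀ t ∈ CQTerms q, ∀ t' ∈ CQTerms q, Relation.ReflTransGen (CQAdj q) t t'

def SubstTerm (σ : ℕ → Term) : Term → Term
  | .var x => σ x
  | .ind a => Term.ind a

def SubstAtom (σ : ℕ → Term) : Atom → Atom
  | .catom P t => Atom.catom P (SubstTerm σ t)
  | .ratom r t t' => Atom.ratom r (SubstTerm σ t) (SubstTerm σ t')

/-- An `A`-variation of a CQ `p`: consistently replace zero or more variables by
individual names from `ind(A)` and possibly identify variables. -/
def IsVariation (A : ABox) (p p' : CQ) : Prop :=
  ∃ σ : ℕ → Term,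
    (∀ x : ℕ, (∃ y, σ x = Term.var y) ∨ ∃ a ∈ ABoxInds A, σ x = Term.ind a) ∧
    p' = p.image (SubstAtom σ)

def Assertion.toAtom : Assertion → Atom
  | .conc P a => Atom.catom P (Term.ind a)
  | .role r a b => Atom.ratom r (Term.ind a) (Term.ind b)

/-- The interpretation `I_q` induced by a CQ. -/
def CQInterp (p : CQ) : Interp where
  Dom := Term
  indI := Term.ind
  indI_inj := fun _ _ hab => Term.ind.inj hab
  concI := fun P => {t | Atom.catom P t ∈ p}
  roleI := fun r => {tt | Atom.ratom r tt.1 tt.2 ∈ p}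

/-- A proper `A`-variation. -/
def IsProperVariation (L : DL) (A : ABox) (p p' : CQ) : Prop :=
  IsVariation A p p' ∧
  (∀ r a b, Atom.ratom r (Term.ind a) (Term.ind b) ∈ p' → Assertion.role r a b ∈ A) ∧
  IsForestModel L (CQInterp p') (A.filter fun α => α.toAtom ∈ p')

/-- A weak homomorphism from a CQ into an interpretation (need not be the
identity on individual names). -/
def WeakHom (I : Interp) (g : Term → I.Dom) (p : CQ) : Prop :=
  (∀ P t, Atom.catom P t ∈ p → g t ∈ I.concI P) ∧
  (∀ r t t', Atom.ratom r t t' ∈ p → (g t, g t') ∈ I.roleI r)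

def ReachStep (L : DL) (I : Interp) (d e : I.Dom) : Prop :=
  match L with
  | DL.alc => ∃ r, (d, e) ∈ I.roleI r
  | DL.alci => ∃ r, (d, e) ∈ I.roleI r ∨ (e, d) ∈ I.roleI r

/-- `L`-reachability in an interpretation. -/
def Reach (L : DL) (I : Interp) : I.Dom → I.Dom → Prop :=
  Relation.ReflTransGen (ReachStep L I)

/-- Compatibility of a weak homomorphism `g` (from `p'` to `I`) with a
homomorphism `h` (from `A` to `I`). -/
def CompatibleWith (L : DL) (I : Interp) (A : ABox) (h : ℕ → I.Dom)
    (p' : CQ) (g : Term → I.Dom) : Prop :=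
  (∀ a ∈ CQInds p', g (Term.ind a) = h a) ∧
  (∀ x : ℕ, Term.var x ∈ CQTerms p' →
    ∃ a ∈ ABoxInds A, Reach L I (h a) (g (Term.var x)))

/-- Query classes. -/
inductive QClass : Type
  | aq
  | fullcq
  | cq
  | ucq

/-- A UCQ belongs to a query class. -/
def UCQInClass : QClass → UCQ → Prop
  | .aq, q => ∃ Q a, q = {({Atom.catom Q (Term.ind a)} : CQ)}
  | .fullcq, q => ∃ p : CQ, q = {p} ∧ CQIsFull p
  | .cq, q => ∃ p : CQ, q = {p}
  | .ucq, _ => True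


/-!
Suppose every component `B` of `A` had a homomorphism `h_B` with `I_{B,h_B,L} ⊭ q`. Role
assertions never cross components, so the `h_B` glue to one homomorphism `h` of `A`, and
`I_{A,h,L} ⊨ q` by assumption. Every element of `I_{A,h,L}` hangs below an individual (its
anchor), and role edges only join elements whose anchors are connected in `A`. So a match of a
connected CQ stays in the part of `I_{A,h,L}` anchored in a single component `B`, and that part
is `I_{B,h,L}`. As `h` agrees with `h_B` on `ind(B)`, we get `I_{B,h_B,L} ⊨ q`, a contradiction.
-/

instance (A : ABox) : Std.Symm (ABoxAdj A) where
  symm _ _ := fun ⟨r, h⟩ => ⟨r, h.symm⟩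

lemma ABoxConn.symm {A : ABox} {a b : ℕ} (h : ABoxConn A a b) : ABoxConn A b a :=
  Std.Symm.symm (r := Relation.ReflTransGen (ABoxAdj A)) _ _ h

lemma mem_ABoxInds {A : ABox} {a : ℕ} : a ∈ ABoxInds A ↔ ∃ α ∈ A, a ∈ AssertionInds α :=
  Finset.mem_biUnion

lemma ABoxInds_nonempty {A : ABox} (hA : A.Nonempty) : (ABoxInds A).Nonempty := by
  obtain ⟨α, hα⟩ := hA
  cases α with
  | conc P a => exact ⟨a, mem_ABoxInds.2 ⟨_, hα, by simp [AssertionInds]⟩⟩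
  | role r a b => exact ⟨a, mem_ABoxInds.2 ⟨_, hα, by simp [AssertionInds]⟩⟩

lemma ABoxConn.of_mem_assertionInds {A : ABox} {α : Assertion} {b c : ℕ} (hα : α ∈ A)
    (hb : b ∈ AssertionInds α) (hc : c ∈ AssertionInds α) : ABoxConn A b c := by
  cases α with
  | conc P a =>
    simp only [AssertionInds, Finset.mem_singleton] at hb hc
    rw [hb, hc]
    exact .refl
  | role r a a' =>
    have hadj : ABoxAdj A a a' := ⟨r, Or.inl hα⟩
    simp only [AssertionInds, Finset.mem_insert, Finset.mem_singleton] at hb hc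
    rcases hb with rfl | rfl <;> rcases hc with rfl | rfl
    exacts [.refl, .single hadj, .single (Std.Symm.symm _ _ hadj), .refl]

lemma ABoxIHom.mono {I : Interp} {h : ℕ → I.Dom} {A B : ABox} (hAB : B ⊆ A)
    (hh : ABoxIHom I h A) : ABoxIHom I h B :=
  ⟨fun P a hα => hh.1 P a (hAB hα), fun r a b hα => hh.2 r a b (hAB hα)⟩

namespace ABox

variable {A : ABox}

open Classical in
noncomputable def component (A : ABox) (a : ℕ) : ABox :=
  A.filter fun α => ∀ c ∈ AssertionInds α, ABoxConn A a c

lemma mem_component {a : ℕ} {α : Assertion} :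
    α ∈ A.component a ↔ α ∈ A ∧ ∀ c ∈ AssertionInds α, ABoxConn A a c := by
  classical
  simp only [component, Finset.mem_filter]

lemma mem_component_of_mem {α : Assertion} {a : ℕ} (hα : α ∈ A)
    (ha : a ∈ AssertionInds α) : α ∈ A.component a :=
  mem_component.2 ⟨hα, fun _ hc => ABoxConn.of_mem_assertionInds hα ha hc⟩

lemma component_subset (a : ℕ) : A.component a ⊆ A :=
  fun _ hα => (mem_component.1 hα).1

lemma isComponent_component {a : ℕ} (ha : a ∈ ABoxInds A) :
    IsComponent (A.component a) A :=
  ⟨a, ha, fun _ => mem_component⟩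

lemma component_eq_of_conn {a b : ℕ} (hab : ABoxConn A a b) :
    A.component a = A.component b := by
  ext α
  simp only [mem_component]
  exact and_congr_right fun _ => forall₂_congr fun c _ => ⟨hab.symm.trans, hab.trans⟩

lemma mem_inds_component {a b : ℕ} :
    b ∈ ABoxInds (A.component a) ↔ b ∈ ABoxInds A ∧ ABoxConn A a b := by
  simp only [mem_ABoxInds, mem_component]
  constructor
  · rintro ⟨α, ⟨hα, hconn⟩, hb⟩
    exact ⟨⟨α, hα, hb⟩, hconn b hb⟩
  · rintro ⟨⟨α, hα, hb⟩, hab⟩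
    exact ⟨α, ⟨hα, fun c hc => hab.trans (ABoxConn.of_mem_assertionInds hα hb hc)⟩, hb⟩

end ABox

lemma ABoxIHom.glue_components {I : Interp} {A : ABox} {g : ABox → ℕ → I.Dom}
    (hg : ∀ a ∈ ABoxInds A, ABoxIHom I (g (A.component a)) (A.component a)) :
    ABoxIHom I (fun a => g (A.component a) a) A := by
  constructor
  · intro P a hα
    have ha : a ∈ AssertionInds (.conc P a) := by simp [AssertionInds]
    exact (hg a (mem_ABoxInds.2 ⟨_, hα, ha⟩)).1 P a (ABox.mem_component_of_mem hα ha)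
  · intro r a b hα
    have ha : a ∈ AssertionInds (.role r a b) := by simp [AssertionInds]
    have hab : ABoxConn A a b := .single ⟨r, Or.inl hα⟩
    show (g (A.component a) a, g (A.component b) b) ∈ I.roleI r
    rw [← ABox.component_eq_of_conn hab]
    exact (hg a (mem_ABoxInds.2 ⟨_, hα, ha⟩)).2 r a b (ABox.mem_component_of_mem hα ha)

def anchor {I : Interp} : IAhDom I → ℕ
  | .inl a => a
  | .inr (a, _) => a

lemma anchor_IAhNode (I : Interp) (a : ℕ) (l : List (DLRole × I.Dom)) :
    anchor (IAhNode I a l) = a := by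
  cases l <;> rfl

lemma Interp.satCQ_restrictP {J : Interp} {P : J.Dom → Prop} {p : CQ} {v : ℕ → J.Dom}
    (hv : ∀ α ∈ p, J.SatAtom v α) (hP : ∀ t ∈ CQTerms p, P (TermEval J v t)) :
    (J.restrictP P).SatCQ p := by
  refine ⟨v, fun α hα => ?_⟩
  have hαP : ∀ t ∈ AtomTerms α, P (TermEval J v t) := fun t ht =>
    hP t (Finset.mem_biUnion.2 ⟨α, hα, ht⟩)
  cases α with
  | catom Q t => exact ⟨hv _ hα, hαP t (by simp [AtomTerms])⟩
  | ratom r t t' => exact ⟨hv _ hα, hαP t (by simp [AtomTerms]), hαP t' (by simp [AtomTerms])⟩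

lemma CQConnected.reflTransGen_of_ratom {p : CQ} (hp : CQConnected p) {β : Type*}
    {R : β → β → Prop} [Std.Symm R] (f : Term → β)
    (hf : ∀ r t t', Atom.ratom r t t' ∈ p → Relation.ReflTransGen R (f t) (f t'))
    {t t' : Term} (ht : t ∈ CQTerms p) (ht' : t' ∈ CQTerms p) :
    Relation.ReflTransGen R (f t) (f t') :=
  Relation.ReflTransGen.lift' f
    (fun s s' ⟨r, h⟩ => h.elim (hf r s s') fun h => Std.Symm.symm _ _ (hf r s' s h))
    t t' (hp t ht t' ht')

section IAh

variable {L : DL} {I : Interp} {A : ABox} {h : ℕ → I.Dom}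

lemma anchor_mem_of_mem_concI {P : ℕ} {x : IAhDom I} (hx : x ∈ (IAh L I A h).concI P) :
    anchor x ∈ ABoxInds A := by
  rcases hx with ⟨a, rfl, ha, -⟩ | ⟨a, l, rfl, -, hval, -⟩
  exacts [ha, hval.1]

lemma anchor_conn_of_mem_roleI {r : ℕ} {x y : IAhDom I}
    (hxy : (x, y) ∈ (IAh L I A h).roleI r) :
    anchor x ∈ ABoxInds A ∧ ABoxConn A (anchor x) (anchor y) := by
  rcases hxy with ⟨a, b, hx, hy, hab⟩ | ⟨a, l, e, hval, hx, hy⟩ | ⟨a, l, e, hval, hx, hy⟩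
  · simp only at hx hy
    subst hx hy
    exact ⟨mem_ABoxInds.2 ⟨_, hab, by simp [AssertionInds, anchor]⟩, .single ⟨r, Or.inl hab⟩⟩
  all_goals
    simp only at hx hy
    subst hx hy
    simp only [anchor_IAhNode]
    exact ⟨hval.1, .refl⟩

lemma exists_anchor_mem_of_satAtom {v : ℕ → IAhDom I} {α : Atom}
    (hα : (IAh L I A h).SatAtom v α) :
    ∃ t ∈ AtomTerms α, anchor (TermEval (IAh L I A h) v t) ∈ ABoxInds A := by
  cases α with
  | catom P t => exact ⟨t, by simp [AtomTerms], anchor_mem_of_mem_concI hα⟩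
  | ratom r t t' => exact ⟨t, by simp [AtomTerms], (anchor_conn_of_mem_roleI hα).1⟩

lemma mem_IAh_component_concI {a P : ℕ} {x : IAhDom I} :
    x ∈ (IAh L I (A.component a) h).concI P ↔
      x ∈ (IAh L I A h).concI P ∧ ABoxConn A a (anchor x) := by
  simp only [IAh, IAhValid, ABox.mem_inds_component]
  constructor
  · rintro (⟨b, rfl, hb, hP⟩ | ⟨b, l, rfl, hl, ⟨hb, hpath⟩, hP⟩)
    · exact ⟨.inl ⟨b, rfl, hb.1, hP⟩, hb.2⟩
    · exact ⟨.inr ⟨b, l, rfl, hl, ⟨hb.1, hpath⟩, hP⟩, hb.2⟩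
  · rintro ⟨⟨b, rfl, hb, hP⟩ | ⟨b, l, rfl, hl, ⟨hb, hpath⟩, hP⟩, hconn⟩
    · exact .inl ⟨b, rfl, ⟨hb, hconn⟩, hP⟩
    · exact .inr ⟨b, l, rfl, hl, ⟨⟨hb, hconn⟩, hpath⟩, hP⟩

lemma mem_IAh_component_roleI {a r : ℕ} {x y : IAhDom I} :
    (x, y) ∈ (IAh L I (A.component a) h).roleI r ↔
      (x, y) ∈ (IAh L I A h).roleI r ∧ ABoxConn A a (anchor x) ∧ ABoxConn A a (anchor y) := by
  simp only [IAh, IAhValid, ABox.mem_inds_component, ABox.mem_component]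
  constructor
  · rintro (⟨b, c, rfl, rfl, hbc, hconn⟩ | ⟨b, l, e, ⟨⟨hb, hab⟩, hpath⟩, rfl, rfl⟩ |
        ⟨b, l, e, ⟨⟨hb, hab⟩, hpath⟩, rfl, rfl⟩)
    · exact ⟨.inl ⟨b, c, rfl, rfl, hbc⟩, hconn b (by simp [AssertionInds]),
        hconn c (by simp [AssertionInds])⟩
    · simp only [anchor_IAhNode]
      exact ⟨.inr (.inl ⟨b, l, e, ⟨hb, hpath⟩, rfl, rfl⟩), hab, hab⟩
    · simp only [anchor_IAhNode]
      exact ⟨.inr (.inr ⟨b, l, e, ⟨hb, hpath⟩, rfl, rfl⟩), hab, hab⟩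
  · rintro ⟨⟨b, c, rfl, rfl, hbc⟩ | ⟨b, l, e, ⟨hb, hpath⟩, rfl, rfl⟩ |
        ⟨b, l, e, ⟨hb, hpath⟩, rfl, rfl⟩, hx, hy⟩
    · refine .inl ⟨b, c, rfl, rfl, hbc, fun c' hc' => ?_⟩
      simp only [AssertionInds, Finset.mem_insert, Finset.mem_singleton] at hc'
      rcases hc' with rfl | rfl
      exacts [hx, hy]
    · rw [anchor_IAhNode] at hx
      exact .inr (.inl ⟨b, l, e, ⟨⟨hb, hx⟩, hpath⟩, rfl, rfl⟩)
    · rw [anchor_IAhNode] at hy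
      exact .inr (.inr ⟨b, l, e, ⟨⟨hb, hy⟩, hpath⟩, rfl, rfl⟩)

lemma IAh_component (a : ℕ) :
    IAh L I (A.component a) h = (IAh L I A h).restrictP fun x => ABoxConn A a (anchor x) := by
  unfold IAh Interp.restrictP
  congr 1
  · funext P
    ext x
    exact mem_IAh_component_concI
  · funext r
    ext ⟨x, y⟩
    exact mem_IAh_component_roleI

lemma IAh_congr {h' : ℕ → I.Dom} (hh' : Set.EqOn h h' (ABoxInds A)) :
    IAh L I A h = IAh L I A h' := by
  have hval : ∀ a l, IAhValid L I A h a l ↔ IAhValid L I A h' a l := fun a l =>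
    and_congr_right fun ha => by rw [hh' ha]
  unfold IAh
  congr 1
  · funext P
    ext x
    simp only [Set.mem_ofPred_eq, IAhValid, and_assoc]
    refine or_congr (exists_congr fun a => ?_) (exists₂_congr fun a l => ?_)
    · exact and_congr_right fun _ => and_congr_right fun ha => by rw [hh' ha]
    · exact and_congr_right fun _ => and_congr_right fun _ => and_congr_right fun ha => by
        rw [hh' ha]
  · funext r
    ext x
    simp only [Set.mem_ofPred_eq, hval]

lemma exists_component_satCQ (hA : A.Nonempty) {p : CQ} (hp : CQConnected p)
    (hs : (IAh L I A h).SatCQ p) :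
    ∃ a ∈ ABoxInds A, (IAh L I (A.component a) h).SatCQ p := by
  obtain ⟨v, hv⟩ := hs
  rcases p.eq_empty_or_nonempty with rfl | ⟨α, hα⟩
  · obtain ⟨a, ha⟩ := ABoxInds_nonempty hA
    exact ⟨a, ha, v, by simp⟩
  obtain ⟨t₀, ht₀, ha₀⟩ := exists_anchor_mem_of_satAtom (hv α hα)
  refine ⟨_, ha₀, ?_⟩
  rw [IAh_component]
  exact Interp.satCQ_restrictP hv fun t ht =>
    hp.reflTransGen_of_ratom (fun t => anchor (TermEval (IAh L I A h) v t))
      (fun _ _ _ hr => (anchor_conn_of_mem_roleI (hv _ hr)).2)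
      (Finset.mem_biUnion.2 ⟨α, hα, ht₀⟩) ht

end IAh

theorem ucq_uniform_component_general (L : DL) (I : Interp) (A : ABox) (q : UCQ)
    (hA : A.Nonempty)
    (hconn : ∀ p ∈ q, CQConnected p)
    (hb : ∀ h : ℕ → I.Dom, ABoxIHom I h A → (IAh L I A h).SatUCQ q) :
    ∃ B : ABox, IsComponent B A ∧
      ∀ h : ℕ → I.Dom, ABoxIHom I h A → (IAh L I B h).SatUCQ q := by
  by_contra! hcon
  have : Nonempty I.Dom := ⟨I.indI 0⟩
  choose! g hg using hcon
  have hglued : ABoxIHom I (fun a => g (A.component a) a) A :=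
    ABoxIHom.glue_components fun a ha =>
      (hg _ (ABox.isComponent_component ha)).1.mono (ABox.component_subset a)
  obtain ⟨p, hp, hsat⟩ := hb _ hglued
  obtain ⟨a, ha, hsat⟩ := exists_component_satCQ hA (hconn p hp) hsat
  have hagree : Set.EqOn (fun b => g (A.component b) b) (g (A.component a))
      (ABoxInds (A.component a)) := fun b hb => by
    rw [ABox.component_eq_of_conn (ABox.mem_inds_component.1 hb).2]
  rw [IAh_congr hagree] at hsat
  exact (hg _ (ABox.isComponent_component ha)).2 ⟨p, hp, hsat⟩

/-- If `(A, q)` is a positive ABox-UCQ example such that each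
CQ in `q` is connected and `I_{A,h,L} ⊨ q` for every homomorphism `h` from `A`
to `I`, then there is a single maximally connected component `B` of `A` such
that `I_{B,h,L} ⊨ q` for every homomorphism `h` from `A` to `I`. -/
theorem ucq_uniform_component (L : DL) (I : Interp) (A : ABox) (q : UCQ)
    (hA : A.Nonempty) (hwfq : UCQInds q ⊆ ABoxInds A)
    (hconn : ∀ p ∈ q, CQConnected p)
    (hb : ∀ h : ℕ → I.Dom, ABoxIHom I h A → (IAh L I A h).SatUCQ q) :
    ∃ B : ABox, IsComponent B A ∧
      ∀ h : ℕ → I.Dom, ABoxIHom I h A → (IAh L I B h).SatUCQ q :=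
  ucq_uniform_component_general L I A q hA hconn hb

end DLFit
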